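/- arXiv:1009.5656 — 4 statements merged into one kernel-verified Lean document; each statement's English description precedes it below -/
import Mathlib

section
/- Let α : (0,∞) → (0,∞) be an orientation-preserving diffeomorphism fixing 0 and ∞ with log α' bounded and α' slowly oscillating at 0 and ∞. Then the function D(t) := α(t)/t is slowly oscillating at 0 and ∞. -/
open Filter Set

noncomputable def osc {E : Type*} [NormedAddCommGroup E] (f : ℝ → E) (a b : ℝ) : ℝ :=
  sSup {d | ∃ t ∈ Set.Icc a b, ∃ τ ∈ Set.Icc a b, d = ‖f t - f τ‖}

/-!
Put `e(t) = |α(t)/t - α'(t)|`. The mean value theorem on `[t/2, t]` gives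
`α(t)/t = (α(t/2)/(t/2) + α'(ξ))/2` for some `ξ ∈ (t/2, t)`, hence
`e(t) ≤ e(t/2)/2 + osc(α', [t/2, t])`. As `α(t)/t` and `α'` both take values in `[0, sup α']`,
`e` is bounded, and iterating the recursion `n` times makes `e(t)` small as soon as `α'`
oscillates little on the `n` dyadic intervals below `t`. Near `0` and near `∞` this holds for
every `t ∈ [r/2, r]`, so there `α(t)/t` stays uniformly close to `α'` and inherits its slow
oscillation.
-/

open Topology

section Osc

variable {E : Type*} [NormedAddCommGroup E] {f g : ℝ → E} {a b c : ℝ}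

lemma osc_nonneg (f : ℝ → E) (a b : ℝ) : 0 ≤ osc f a b :=
  Real.sSup_nonneg <| by rintro _ ⟨t, -, τ, -, rfl⟩; exact norm_nonneg _

lemma osc_le (hc : 0 ≤ c) (h : ∀ t ∈ Icc a b, ∀ τ ∈ Icc a b, ‖f t - f τ‖ ≤ c) :
    osc f a b ≤ c :=
  Real.sSup_le (by rintro _ ⟨t, ht, τ, hτ, rfl⟩; exact h t ht τ hτ) hc

lemma norm_sub_le_osc (h : ∀ t ∈ Icc a b, ∀ τ ∈ Icc a b, ‖f t - f τ‖ ≤ c) {t τ : ℝ}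
    (ht : t ∈ Icc a b) (hτ : τ ∈ Icc a b) : ‖f t - f τ‖ ≤ osc f a b :=
  le_csSup ⟨c, by rintro _ ⟨t, ht, τ, hτ, rfl⟩; exact h t ht τ hτ⟩ ⟨t, ht, τ, hτ, rfl⟩

lemma osc_le_osc_add_of_norm_sub_le (hg : ∀ t ∈ Icc a b, ∀ τ ∈ Icc a b, ‖g t - g τ‖ ≤ c)
    {ε : ℝ} (hε : 0 ≤ ε) (hfg : ∀ t ∈ Icc a b, ‖f t - g t‖ ≤ ε) :
    osc f a b ≤ osc g a b + 2 * ε := by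
  refine osc_le (by linarith [osc_nonneg g a b]) fun t ht τ hτ => ?_
  calc ‖f t - f τ‖ = ‖(f t - g t) + (g t - g τ) - (f τ - g τ)‖ := by congr 1; abel
    _ ≤ ‖f t - g t‖ + ‖g t - g τ‖ + ‖f τ - g τ‖ := norm_sub_le_of_le (norm_add_le _ _) le_rfl
    _ ≤ ε + osc g a b + ε := by
      gcongr
      exacts [hfg t ht, norm_sub_le_osc hg ht hτ, hfg τ hτ]
    _ = osc g a b + 2 * ε := by ring

end Osc

lemma le_div_two_pow_add_of_forall_le_half_add {B : ℝ} (hB : 0 ≤ B) :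
    ∀ (n : ℕ) (u : ℕ → ℝ), (∀ k < n, u k ≤ u (k + 1) / 2 + B) → u 0 ≤ u n / 2 ^ n + 2 * B
  | 0, u, _ => by simpa using hB
  | n + 1, u, h => by
    have ih := le_div_two_pow_add_of_forall_le_half_add hB n (fun k => u (k + 1))
      fun k hk => h (k + 1) (by omega)
    rw [pow_succ]
    calc u 0 ≤ u 1 / 2 + B := h 0 n.succ_pos
      _ ≤ (u (n + 1) / 2 ^ n + 2 * B) / 2 + B := by gcongr
      _ = u (n + 1) / (2 ^ n * 2) + 2 * B := by field_simp; ring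

section Derivative

variable {α α' : ℝ → ℝ} {K t : ℝ}

lemma HasDerivAt.nonneg_of_monotoneOn_of_mem_nhds {a : ℝ} {s : Set ℝ} (hd : HasDerivAt α a t)
    (hmono : MonotoneOn α s) (hs : s ∈ 𝓝 t) : 0 ≤ a :=
  hd.hasDerivWithinAt.nonneg_of_monotoneOn
    ((PerfectSpace.univ_preperfect t (mem_univ t)).nhds_inter hs |>.mono
      (principal_mono.2 inter_subset_left)) hmono

lemma exists_sub_eq_deriv_mul_of_pos (hderiv : ∀ t ∈ Ioi (0 : ℝ), HasDerivAt α (α' t) t)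
    {s : ℝ} (hs : 0 < s) (hst : s < t) : ∃ ξ ∈ Ioo s t, α t - α s = α' ξ * (t - s) := by
  obtain ⟨ξ, hξ, hslope⟩ := exists_hasDerivAt_eq_slope α α' hst
    (fun x hx => (hderiv x (hs.trans_le hx.1)).continuousAt.continuousWithinAt)
    (fun x hx => hderiv x (hs.trans hx.1))
  exact ⟨ξ, hξ, by rw [hslope, div_mul_cancel₀ _ (sub_ne_zero.2 hst.ne')]⟩

lemma div_mem_Icc_of_deriv_mem_Icc (hderiv : ∀ t ∈ Ioi (0 : ℝ), HasDerivAt α (α' t) t)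
    (hα' : ∀ t ∈ Ioi (0 : ℝ), α' t ∈ Icc 0 K) (h0 : Tendsto α (𝓝[>] 0) (𝓝 0)) (ht : 0 < t) :
    α t / t ∈ Icc 0 K := by
  have hincr : ∀ᶠ s in 𝓝[>] 0, α t - α s ∈ Icc 0 (K * t) := by
    filter_upwards [Ioo_mem_nhdsGT ht] with s hs
    obtain ⟨ξ, hξ, hsub⟩ := exists_sub_eq_deriv_mul_of_pos hderiv hs.1 hs.2
    obtain ⟨hξ0, hξK⟩ := hα' ξ (hs.1.trans hξ.1)
    rw [hsub]
    exact ⟨mul_nonneg hξ0 (by linarith [hs.2]), by nlinarith [hs.1, hs.2]⟩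
  have hαt := isClosed_Icc.mem_of_tendsto (tendsto_const_nhds.sub h0) hincr
  rw [sub_zero] at hαt
  exact ⟨div_nonneg hαt.1 ht.le, (div_le_iff₀ ht).2 hαt.2⟩

lemma abs_div_sub_deriv_le_half (hderiv : ∀ t ∈ Ioi (0 : ℝ), HasDerivAt α (α' t) t)
    (ht : 0 < t) {ω : ℝ} (hω : ∀ x ∈ Icc (t / 2) t, |α' x - α' t| ≤ ω) :
    |α t / t - α' t| ≤ |α (t / 2) / (t / 2) - α' (t / 2)| / 2 + ω := by
  obtain ⟨ξ, hξ, hsub⟩ := exists_sub_eq_deriv_mul_of_pos hderiv (half_pos ht) (half_lt_self ht)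
  have hsplit : α t / t - α' t =
      ((α (t / 2) / (t / 2) - α' (t / 2)) + (α' (t / 2) - α' t) + (α' ξ - α' t)) / 2 := by
    rw [eq_add_of_sub_eq hsub]; field_simp; ring
  have h1 := hω (t / 2) ⟨le_rfl, by linarith⟩
  have h2 := hω ξ ⟨hξ.1.le, hξ.2.le⟩
  rw [hsplit, abs_div, abs_two]
  linarith [abs_add_three (α (t / 2) / (t / 2) - α' (t / 2)) (α' (t / 2) - α' t) (α' ξ - α' t)]

lemma norm_sub_le_of_forall_mem_Icc {f : ℝ → ℝ} (hf : ∀ t ∈ Ioi (0 : ℝ), f t ∈ Icc 0 K)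
    {a b : ℝ} (ha : 0 < a) : ∀ x ∈ Icc a b, ∀ y ∈ Icc a b, ‖f x - f y‖ ≤ K := fun x hx y hy => by
  obtain ⟨hx0, hxK⟩ := hf x (ha.trans_le hx.1)
  obtain ⟨hy0, hyK⟩ := hf y (ha.trans_le hy.1)
  exact (Real.norm_eq_abs _).trans_le (abs_sub_le_of_nonneg_of_le hx0 hxK hy0 hyK)

lemma abs_div_sub_deriv_le (hderiv : ∀ t ∈ Ioi (0 : ℝ), HasDerivAt α (α' t) t)
    (hα' : ∀ t ∈ Ioi (0 : ℝ), α' t ∈ Icc 0 K) (h0 : Tendsto α (𝓝[>] 0) (𝓝 0)) (n : ℕ)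
    (ht : 0 < t) {B : ℝ} (hB : 0 ≤ B) (hω : ∀ k < n, osc α' (t / 2 ^ (k + 1)) (t / 2 ^ k) ≤ B) :
    |α t / t - α' t| ≤ K / 2 ^ n + 2 * B := by
  set u : ℕ → ℝ := fun k => |α (t / 2 ^ k) / (t / 2 ^ k) - α' (t / 2 ^ k)|
  have hrec : ∀ k < n, u k ≤ u (k + 1) / 2 + B := fun k hk => by
    have hs : 0 < t / 2 ^ k := by positivity
    have hhalf : t / 2 ^ k / 2 = t / 2 ^ (k + 1) := by rw [pow_succ, div_div]
    have := abs_div_sub_deriv_le_half hderiv hs (ω := B) fun x hx =>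
      (norm_sub_le_osc (norm_sub_le_of_forall_mem_Icc hα' (half_pos hs)) hx
        (right_mem_Icc.2 (half_le_self hs.le))).trans (hhalf ▸ hω k hk)
    rwa [hhalf] at this
  have hun : u n ≤ K := by
    have hs : 0 < t / 2 ^ n := by positivity
    obtain ⟨hD0, hDK⟩ := div_mem_Icc_of_deriv_mem_Icc hderiv hα' h0 hs
    obtain ⟨hα'0, hα'K⟩ := hα' _ hs
    exact abs_sub_le_of_nonneg_of_le hD0 hDK hα'0 hα'K
  calc |α t / t - α' t| = u 0 := by simp [u]
    _ ≤ u n / 2 ^ n + 2 * B := le_div_two_pow_add_of_forall_le_half_add hB n u hrec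
    _ ≤ K / 2 ^ n + 2 * B := by gcongr

lemma osc_div_le (hderiv : ∀ t ∈ Ioi (0 : ℝ), HasDerivAt α (α' t) t)
    (hα' : ∀ t ∈ Ioi (0 : ℝ), α' t ∈ Icc 0 K) (h0 : Tendsto α (𝓝[>] 0) (𝓝 0)) (n : ℕ)
    {r B : ℝ} (hr : 0 < r) (hB : 0 ≤ B) (hω : ∀ s ∈ Icc (r / 2 ^ n) r, osc α' (s / 2) s ≤ B) :
    osc (fun t => α t / t) (r / 2) r ≤ 2 * K / 2 ^ n + 5 * B := by
  have hK : 0 ≤ K := (hα' r hr).1.trans (hα' r hr).2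
  have hclose : ∀ t ∈ Icc (r / 2) r, ‖α t / t - α' t‖ ≤ K / 2 ^ n + 2 * B := fun t ht => by
    have htpos : 0 < t := (half_pos hr).trans_le ht.1
    refine (Real.norm_eq_abs _).trans_le (abs_div_sub_deriv_le hderiv hα' h0 n htpos hB
      fun k hk => ?_)
    have hlow : r / 2 ^ n ≤ t / 2 ^ k :=
      calc r / 2 ^ n ≤ r / 2 ^ (k + 1) := by gcongr; exacts [one_le_two, hk]
        _ = r / 2 / 2 ^ k := by rw [pow_succ', div_div]
        _ ≤ t / 2 ^ k := by gcongr; exact ht.1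
    have hup : t / 2 ^ k ≤ r := (div_le_self htpos.le (one_le_pow₀ one_le_two)).trans ht.2
    simpa [pow_succ, div_div] using hω (t / 2 ^ k) ⟨hlow, hup⟩
  calc osc (fun t => α t / t) (r / 2) r ≤ osc α' (r / 2) r + 2 * (K / 2 ^ n + 2 * B) :=
        osc_le_osc_add_of_norm_sub_le (norm_sub_le_of_forall_mem_Icc hα' (half_pos hr))
          (by positivity) hclose
    _ ≤ B + 2 * (K / 2 ^ n + 2 * B) := by
        gcongr
        exact hω r ⟨div_le_self hr.le (one_le_pow₀ one_le_two), le_rfl⟩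
    _ = 2 * K / 2 ^ n + 5 * B := by ring

lemma tendsto_osc_div {l : Filter ℝ}
    (hl : ∀ c > (0 : ℝ), ∀ P : ℝ → Prop, (∀ᶠ s in l, P s) →
      ∀ᶠ r in l, 0 < r ∧ ∀ s ∈ Icc (r / c) r, P s)
    (hderiv : ∀ t ∈ Ioi (0 : ℝ), HasDerivAt α (α' t) t)
    (hα' : ∀ t ∈ Ioi (0 : ℝ), α' t ∈ Icc 0 K) (h0 : Tendsto α (𝓝[>] 0) (𝓝 0))
    (hso : Tendsto (fun r => osc α' (r / 2) r) l (𝓝 0)) :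
    Tendsto (fun r => osc (fun t => α t / t) (r / 2) r) l (𝓝 0) := by
  refine tendsto_order.2 ⟨fun a ha => Eventually.of_forall fun r => ha.trans_le (osc_nonneg _ _ _),
    fun ε hε => ?_⟩
  obtain ⟨n, hn⟩ := pow_unbounded_of_one_lt (4 * K / ε) one_lt_two
  have hsmall := hso.eventually (eventually_le_nhds (show (0 : ℝ) < ε / 20 by positivity))
  filter_upwards [hl (2 ^ n) (by positivity) _ hsmall] with r ⟨hr, hω⟩
  have hK : 2 * K / 2 ^ n < ε / 2 := by
    rw [div_lt_iff₀ hε] at hn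
    rw [div_lt_iff₀ (by positivity)]
    linarith
  calc osc (fun t => α t / t) (r / 2) r ≤ 2 * K / 2 ^ n + 5 * (ε / 20) :=
        osc_div_le hderiv hα' h0 n hr (by positivity) hω
    _ < ε := by linarith

end Derivative

lemma eventually_nhdsGT_forall_Icc_div {P : ℝ → Prop} {c : ℝ} (hc : 0 < c)
    (hP : ∀ᶠ s in 𝓝[>] 0, P s) : ∀ᶠ r in 𝓝[>] 0, 0 < r ∧ ∀ s ∈ Icc (r / c) r, P s := by
  obtain ⟨δ, hδ, hsub⟩ := mem_nhdsGT_iff_exists_Ioo_subset.1 hP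
  filter_upwards [Ioo_mem_nhdsGT hδ] with r hr
  exact ⟨hr.1, fun s hs => hsub ⟨(div_pos hr.1 hc).trans_le hs.1, hs.2.trans_lt hr.2⟩⟩

lemma eventually_atTop_forall_Icc_div {P : ℝ → Prop} {c : ℝ} (hc : 0 < c)
    (hP : ∀ᶠ s in atTop, P s) : ∀ᶠ r in atTop, 0 < r ∧ ∀ s ∈ Icc (r / c) r, P s := by
  obtain ⟨T, hT⟩ := eventually_atTop.1 hP
  filter_upwards [eventually_ge_atTop (max (c * T) 1)] with r hr
  have hcT : T * c ≤ r := by linarith [le_max_left (c * T) 1]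
  exact ⟨by linarith [le_max_right (c * T) 1],
    fun s hs => hT s (((le_div_iff₀ hc).2 hcT).trans hs.1)⟩

theorem quotient_slowly_oscillating_general (α α' : ℝ → ℝ)
    (hmono : StrictMonoOn α (Set.Ioi 0))
    (hderiv : ∀ t ∈ Set.Ioi (0:ℝ), HasDerivAt α (α' t) t)
    (h0 : Tendsto α (nhdsWithin 0 (Set.Ioi 0)) (nhds 0))
    (hlog_bdd : ∃ C, ∀ t ∈ Set.Ioi (0:ℝ), |Real.log (α' t)| ≤ C)
    (hso0 : Tendsto (fun r => osc α' (r / 2) r) (nhdsWithin 0 (Set.Ioi 0)) (nhds 0))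
    (hsoinf : Tendsto (fun r => osc α' (r / 2) r) atTop (nhds 0)) :
    Tendsto (fun r => osc (fun t => α t / t) (r / 2) r) (nhdsWithin 0 (Set.Ioi 0)) (nhds 0) ∧
    Tendsto (fun r => osc (fun t => α t / t) (r / 2) r) atTop (nhds 0) := by
  obtain ⟨C, hC⟩ := hlog_bdd
  have hα' : ∀ t ∈ Ioi (0 : ℝ), α' t ∈ Icc 0 (Real.exp C) := fun t ht =>
    ⟨(hderiv t ht).nonneg_of_monotoneOn_of_mem_nhds hmono.monotoneOn (Ioi_mem_nhds ht),
      (Real.le_exp_log _).trans (Real.exp_le_exp.2 (abs_le.1 (hC t ht)).2)⟩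
  exact ⟨tendsto_osc_div (fun _ hc _ => eventually_nhdsGT_forall_Icc_div hc) hderiv hα' h0 hso0,
    tendsto_osc_div (fun _ hc _ => eventually_atTop_forall_Icc_div hc) hderiv hα' h0 hsoinf⟩

theorem quotient_slowly_oscillating (α α' : ℝ → ℝ)
    (hbij : Set.BijOn α (Set.Ioi 0) (Set.Ioi 0))
    (hmono : StrictMonoOn α (Set.Ioi 0))
    (hderiv : ∀ t ∈ Set.Ioi (0:ℝ), HasDerivAt α (α' t) t)
    (h0 : Tendsto α (nhdsWithin 0 (Set.Ioi 0)) (nhds 0))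
    (hinf : Tendsto α atTop atTop)
    (hlog_bdd : ∃ C, ∀ t ∈ Set.Ioi (0:ℝ), |Real.log (α' t)| ≤ C)
    (hso0 : Tendsto (fun r => osc α' (r / 2) r) (nhdsWithin 0 (Set.Ioi 0)) (nhds 0))
    (hsoinf : Tendsto (fun r => osc α' (r / 2) r) atTop (nhds 0)) :
    Tendsto (fun r => osc (fun t => α t / t) (r / 2) r) (nhdsWithin 0 (Set.Ioi 0)) (nhds 0) ∧
    Tendsto (fun r => osc (fun t => α t / t) (r / 2) r) atTop (nhds 0) :=
  quotient_slowly_oscillating_general α α' hmono hderiv h0 hlog_bdd hso0 hsoinf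
end

section
/- Let α : (0,∞) → (0,∞) be a diffeomorphism with log α' bounded, let η(y) = y/(1−y), and set α̃ := η^{−1}∘α∘η on (0,1). Then for 1 < p < ∞ and the isometry G : L^p(0,∞) → L^p(0,1), (Gφ)(y) = (1−y)^{−2/p}φ(η(y)), one has G W_α G^{−1} = c_{α,p} W_{α̃}, where (W_α f) = f∘α, (W_{α̃} g) = g∘α̃, and c_{α,p}(y) = ((1−α̃(y))/(1−y))^{2/p}. -/
open Filter Set

noncomputable def Gop (p : ℝ) (φ : ℝ → ℂ) : ℝ → ℂ :=
  fun y => (((1 - y) ^ (-2 / p) : ℝ) : ℂ) * φ (y / (1 - y))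

noncomputable def Ginv (p : ℝ) (f : ℝ → ℂ) : ℝ → ℂ :=
  fun t => (((1 + t) ^ (-2 / p) : ℝ) : ℂ) * f (t / (1 + t))

/-- The transplanted shift `α̃ = η⁻¹ ∘ α ∘ η`, where `η(y)=y/(1-y)`. -/
noncomputable def alphaTilde (α : ℝ → ℝ) : ℝ → ℝ :=
  fun y => α (y / (1 - y)) / (1 + α (y / (1 - y)))

/-!
With `t = α (η y) > 0` one has `α̃ y = η⁻¹ t = t / (1 + t)`, hence `1 - α̃ y = (1 + t)⁻¹`, and the
weight `c_{α,p}(y)` splits as `(1 + t)^(-2/p) (1 - y)^(-2/p)`: exactly the product of the weights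
contributed by `G⁻¹` (at the point `t`) and by `G` (at the point `y`).
-/

lemma one_sub_div_one_add {t : ℝ} (ht : 1 + t ≠ 0) : 1 - t / (1 + t) = (1 + t)⁻¹ := by
  field_simp
  ring

lemma rpow_one_sub_div_one_add_div {t y : ℝ} (ht : 0 < 1 + t) (hy : 0 < 1 - y) (r : ℝ) :
    ((1 - t / (1 + t)) / (1 - y)) ^ r = (1 + t) ^ (-r) * (1 - y) ^ (-r) := by
  rw [one_sub_div_one_add ht.ne', Real.div_rpow (inv_pos.2 ht).le hy.le, Real.inv_rpow ht.le,
    Real.rpow_neg ht.le, Real.rpow_neg hy.le, div_eq_mul_inv]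

theorem conjugated_shift_operator_general (p : ℝ) (α : ℝ → ℝ)
    (hbij : Set.BijOn α (Set.Ioi 0) (Set.Ioi 0)) :
    ∀ f : ℝ → ℂ, ∀ y ∈ Set.Ioo (0:ℝ) 1,
      Gop p (fun t => Ginv p f (α t)) y =
        ((((1 - alphaTilde α y) / (1 - y)) ^ (2 / p) : ℝ) : ℂ) * f (alphaTilde α y) := by
  rintro f y ⟨hy0, hy1⟩
  have hy : 0 < 1 - y := by linarith
  have ht : 0 < 1 + α (y / (1 - y)) := by
    have : 0 < α (y / (1 - y)) := hbij.mapsTo (div_pos hy0 hy)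
    linarith
  simp only [Gop, Ginv, alphaTilde]
  rw [rpow_one_sub_div_one_add_div ht hy, ← neg_div]
  push_cast
  ring

/-- `G W_α G⁻¹ = c_{α,p} W_{α̃}` as operators on `L^p(0,1)`, stated pointwise on `(0,1)`. -/
theorem conjugated_shift_operator (p : ℝ) (hp : 1 < p) (α α' : ℝ → ℝ)
    (hbij : Set.BijOn α (Set.Ioi 0) (Set.Ioi 0))
    (hmono : StrictMonoOn α (Set.Ioi 0))
    (hderiv : ∀ t ∈ Set.Ioi (0:ℝ), HasDerivAt α (α' t) t)
    (hlog_bdd : ∃ C, ∀ t ∈ Set.Ioi (0:ℝ), |Real.log (α' t)| ≤ C) :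
    ∀ f : ℝ → ℂ, ∀ y ∈ Set.Ioo (0:ℝ) 1,
      Gop p (fun t => Ginv p f (α t)) y =
        ((((1 - alphaTilde α y) / (1 - y)) ^ (2 / p) : ℝ) : ℂ) * f (alphaTilde α y) :=
  conjugated_shift_operator_general p α hbij
end

section
/- Suppose a,b ∈ SO(ℝ₊), α is a slowly oscillating shift, 1 < p < ∞, and inf_{t>0}|a(t)| > 0 together with liminf_{t→s}(|a(t)| − |b(t)| (α'(t))^{−1/p}) > 0 for s ∈ {0,∞}. Then the operator aI − bW_α is invertible on L^p(0,∞) with inverse (aI − bW_α)^{−1} = Σ_{n=0}^∞ (a^{−1} b W_α)^n a^{−1} I, the series converging in operator norm. -/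
/-!
Put `A = a⁻¹ b W_α`. Then `aI - bW_α = a (I - A)`, so it suffices that `∑ Aⁿ` converges in
operator norm. The power `Aⁿ` is the weighted shift `f ↦ (∏_{k<n} (b / a) ∘ αₖ) · (f ∘ αₙ)`
with `αₖ = α^[k]`; substituting `s = αₙ t` bounds its norm on `L^p` by the supremum over `t` of
`∏_{k<n} c (αₖ t)`, where `c = |b / a| (α')^{-1/p}`. Condition (1.2) gives `c ≤ ρ < 1` outside a
compact window `[m, M] ⊂ (0, ∞)`, and since `α` has no fixed point it moves the points of the
window by at least some `d > 0` in a fixed direction, so every orbit visits the window at most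
`N` times. Hence `‖Aⁿ‖ ≤ K ρⁿ`.
-/

open Filter Set MeasureTheory

def SO {E : Type*} [NormedAddCommGroup E] (f : ℝ → E) : Prop :=
  ContinuousOn f (Set.Ioi 0) ∧ (∃ C, ∀ t ∈ Set.Ioi (0:ℝ), ‖f t‖ ≤ C) ∧
  ∀ l ∈ Set.Ioo (0:ℝ) 1,
    Tendsto (fun r => osc f (l * r) r) (nhdsWithin 0 (Set.Ioi 0)) (nhds 0) ∧
    Tendsto (fun r => osc f (l * r) r) atTop (nhds 0)

open scoped Finset Topology ENNReal

theorem exp_neg_le_of_abs_log_le {f : ℝ → ℝ} {s : Set ℝ} {C : ℝ} {t₀ : ℝ}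
    (hs : IsPreconnected s) (hf : ContinuousOn f s) (ht₀ : t₀ ∈ s) (hpos : 0 < f t₀)
    (hlog : ∀ t ∈ s, |Real.log (f t)| ≤ C) {t : ℝ} (ht : t ∈ s) :
    Real.exp (-C) ≤ f t := by
  have not_small : ∀ τ ∈ s, 0 < f τ → Real.exp (-C) ≤ f τ := fun τ hτ hτpos => by
    rw [← Real.log_le_log_iff (Real.exp_pos _) hτpos, Real.log_exp]
    exact neg_le_of_abs_le (hlog τ hτ)
  by_contra! hlt
  have hft : f t ≤ 0 := not_lt.mp fun hpos' => hlt.not_ge (not_small t ht hpos')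
  -- `Real.log` is junk at `f t ≤ 0`; by continuity `f` would pass through `(0, exp (-C))`.
  set y := min (f t₀) (Real.exp (-C) / 2)
  have hy : 0 < y := lt_min hpos (by positivity)
  obtain ⟨τ, hτ, hτy⟩ := hs.intermediate_value ht ht₀ hf ⟨hft.trans hy.le, min_le_left _ _⟩
  have := not_small τ hτ (hτy ▸ hy)
  linarith [min_le_right (f t₀) (Real.exp (-C) / 2), Real.exp_pos (-C)]

theorem StrictMonoOn.exists_deriv_pos {f f' : ℝ → ℝ} {a b : ℝ} (hab : a < b)
    (hf : StrictMonoOn f (Icc a b)) (hf' : ∀ t ∈ Icc a b, HasDerivAt f (f' t) t) :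
    ∃ t ∈ Ioo a b, 0 < f' t := by
  obtain ⟨t, ht, hslope⟩ := exists_hasDerivAt_eq_slope f f' hab
    (fun x hx => (hf' x hx).continuousAt.continuousWithinAt)
    (fun x hx => hf' x (Ioo_subset_Icc_self hx))
  refine ⟨t, ht, hslope ▸ div_pos ?_ (sub_pos.mpr hab)⟩
  exact sub_pos.mpr (hf (left_mem_Icc.mpr hab.le) (right_mem_Icc.mpr hab.le) hab)

theorem StrictMonoOn.exp_neg_le_deriv {f f' : ℝ → ℝ} {a C : ℝ} (hf : StrictMonoOn f (Ioi a))
    (hf' : ∀ t ∈ Ioi a, HasDerivAt f (f' t) t) (hf'c : ContinuousOn f' (Ioi a))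
    (hlog : ∀ t ∈ Ioi a, |Real.log (f' t)| ≤ C) {t : ℝ} (ht : t ∈ Ioi a) :
    Real.exp (-C) ≤ f' t := by
  have hsub : Icc (a + 1) (a + 2) ⊆ Ioi a := fun x hx => by
    simp only [mem_Ioi]; linarith [hx.1]
  obtain ⟨t₀, ht₀, hpos⟩ := (hf.mono hsub).exists_deriv_pos (by linarith)
    fun x hx => hf' x (hsub hx)
  exact exp_neg_le_of_abs_log_le isPreconnected_Ioi hf'c (hsub (Ioo_subset_Icc_self ht₀)) hpos
    hlog ht

theorem hasDerivAt_iterate {f f' : ℝ → ℝ} {s : Set ℝ} (hmaps : MapsTo f s s)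
    (hf : ∀ t ∈ s, HasDerivAt f (f' t) t) (n : ℕ) {t : ℝ} (ht : t ∈ s) :
    HasDerivAt f^[n] (∏ k ∈ Finset.range n, f' (f^[k] t)) t := by
  induction n with
  | zero => simpa using hasDerivAt_id t
  | succ n ih =>
    rw [Function.iterate_succ', Finset.prod_range_succ, mul_comm]
    exact (hf _ (hmaps.iterate n ht)).comp t ih

theorem card_le_of_forall_le_abs_sub {ι : Type*} [LinearOrder ι] (S : Finset ι) {g : ι → ℝ}
    {m M d : ℝ} (hd : 0 < d) (hmem : ∀ k ∈ S, g k ∈ Icc m M)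
    (hsep : ∀ k ∈ S, ∀ k' ∈ S, k < k' → d ≤ |g k - g k'|) :
    #S ≤ ⌊(M - m) / d⌋₊ + 1 := by
  -- Points that are `d`-separated fall into distinct cells of length `d`.
  set cell : ι → ℕ := fun k => ⌊(g k - m) / d⌋₊
  have hcell : ∀ k ∈ S, cell k ∈ Finset.range (⌊(M - m) / d⌋₊ + 1) := fun k hk => by
    rw [Finset.mem_range, Nat.lt_succ_iff]
    exact Nat.floor_le_floor (by gcongr; exact (hmem k hk).2)
  have hinj : InjOn cell S := by
    intro k hk k' hk' hkk'
    have hfl : ⌊(g k - m) / d⌋ = ⌊(g k' - m) / d⌋ := by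
      have h₁ : 0 ≤ (g k - m) / d := div_nonneg (sub_nonneg.mpr (hmem k hk).1) hd.le
      have h₂ : 0 ≤ (g k' - m) / d := div_nonneg (sub_nonneg.mpr (hmem k' hk').1) hd.le
      rw [← Int.natCast_floor_eq_floor h₁, ← Int.natCast_floor_eq_floor h₂]
      exact congrArg _ hkk'
    have hclose : |g k - g k'| < d := by
      have := Int.abs_sub_lt_one_of_floor_eq_floor hfl
      rwa [← sub_div, sub_sub_sub_cancel_right, abs_div, abs_of_pos hd, div_lt_one hd] at this
    by_contra hne
    rcases lt_or_gt_of_ne hne with h | h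
    · exact (hsep k hk k' hk' h).not_gt hclose
    · exact (hsep k' hk' k hk h).not_gt (abs_sub_comm (g k) (g k') ▸ hclose)
  simpa using Finset.card_le_card_of_injOn cell hcell hinj

theorem IsPreconnected.forall_lt_or_forall_gt_of_ne {f : ℝ → ℝ} {s : Set ℝ}
    (hs : IsPreconnected s) (hf : ContinuousOn f s) (hfix : ∀ t ∈ s, f t ≠ t) :
    (∀ t ∈ s, f t < t) ∨ (∀ t ∈ s, t < f t) := by
  by_contra! h
  obtain ⟨⟨t₁, ht₁, h₁⟩, ⟨t₂, ht₂, h₂⟩⟩ := h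
  obtain ⟨τ, hτ, hτfix⟩ := hs.intermediate_value₂ ht₁ ht₂ continuousOn_id hf h₁ h₂
  exact hfix τ hτ hτfix.symm

theorem exists_card_orbit_visits_le {f : ℝ → ℝ} {s : Set ℝ} (hs : IsPreconnected s)
    (hf : ContinuousOn f s) (hmaps : MapsTo f s s) (hfix : ∀ t ∈ s, f t ≠ t) {m M : ℝ}
    (hmM : Icc m M ⊆ s) :
    ∃ N : ℕ, ∀ t ∈ s, ∀ n, #{k ∈ Finset.range n | f^[k] t ∈ Icc m M} ≤ N := by
  obtain ⟨d, hd, hdisp⟩ := isCompact_Icc.exists_forall_le' (f := fun x => |f x - x|)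
    ((hf.mono hmM).sub continuousOn_id).abs
    fun x hx => abs_pos.mpr (sub_ne_zero.mpr (hfix x (hmM hx)))
  refine ⟨⌊(M - m) / d⌋₊ + 1, fun t ht n => card_le_of_forall_le_abs_sub _ hd
    (fun k hk => (Finset.mem_filter.mp hk).2) fun k hk k' hk' hkk' => ?_⟩
  have hstep := hdisp _ (Finset.mem_filter.mp hk).2
  have hsucc : ∀ j, f^[j + 1] t = f (f^[j] t) := fun j => Function.iterate_succ_apply' f j t
  rcases hs.forall_lt_or_forall_gt_of_ne hf hfix with hdec | hinc
  · have horb : Antitone fun j => f^[j] t := antitone_nat_of_succ_le fun j =>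
      (hsucc j).trans_le (hdec _ (hmaps.iterate j ht)).le
    have hk'k : f^[k'] t ≤ f (f^[k] t) := (hsucc k) ▸ horb (Nat.succ_le_of_lt hkk')
    rw [abs_of_neg (sub_neg.mpr (hdec _ (hmaps.iterate k ht)))] at hstep
    exact le_abs.mpr (Or.inl (by linarith))
  · have horb : Monotone fun j => f^[j] t := monotone_nat_of_le_succ fun j =>
      (hinc _ (hmaps.iterate j ht)).le.trans_eq (hsucc j).symm
    have hk'k : f (f^[k] t) ≤ f^[k'] t := (hsucc k) ▸ horb (Nat.succ_le_of_lt hkk')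
    rw [abs_of_pos (sub_pos.mpr (hinc _ (hmaps.iterate k ht)))] at hstep
    exact le_abs.mpr (Or.inr (by linarith))

theorem Finset.prod_le_div_pow_mul_pow {ι : Type*} (s : Finset ι) (P : ι → Prop) [DecidablePred P]
    {f : ι → ℝ} {C ρ : ℝ} {N : ℕ} (hf0 : ∀ i ∈ s, 0 ≤ f i) (hfC : ∀ i ∈ s, f i ≤ C)
    (hfρ : ∀ i ∈ s, ¬ P i → f i ≤ ρ) (hN : #{i ∈ s | P i} ≤ N) (hρ : 0 < ρ) (hρC : ρ ≤ C) :
    ∏ i ∈ s, f i ≤ (C / ρ) ^ N * ρ ^ #s := by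
  have hle_pow : ∀ t ⊆ s, ∀ B, (∀ i ∈ t, f i ≤ B) → ∏ i ∈ t, f i ≤ B ^ #t := fun t ht B hB =>
    (prod_le_prod (fun i hi => hf0 i (ht hi)) hB).trans_eq (prod_const B)
  calc ∏ i ∈ s, f i = (∏ i ∈ s with P i, f i) * ∏ i ∈ s with ¬ P i, f i :=
        (prod_filter_mul_prod_filter_not s P f).symm
    _ ≤ C ^ #{i ∈ s | P i} * ρ ^ #{i ∈ s | ¬ P i} :=
        mul_le_mul (hle_pow _ (filter_subset _ _) C fun i hi => hfC i (filter_subset _ _ hi))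
          (hle_pow _ (filter_subset _ _) ρ fun i hi =>
            hfρ i (filter_subset _ _ hi) (mem_filter.mp hi).2)
          (prod_nonneg fun i hi => hf0 i (filter_subset _ _ hi)) (pow_nonneg (hρ.le.trans hρC) _)
    _ = (C / ρ) ^ #{i ∈ s | P i} * ρ ^ #s := by
        rw [← card_filter_add_card_filter_not (s := s) P, pow_add, div_pow]
        field_simp
    _ ≤ (C / ρ) ^ N * ρ ^ #s := by
        gcongr
        exact (one_le_div hρ).mpr hρC

theorem Filter.exists_pos_forall_eventually_le_of_liminf_pos {X : Type*} {l : Filter X}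
    {u : X → ℝ} (h : 0 < liminf u l) : ∃ δ > 0, ∀ᶠ x in l, δ ≤ u x := by
  rw [liminf_eq] at h
  -- Were no constant eventually below `u`, the `sSup` would be `sSup ∅ = 0`.
  have hne : {a | ∀ᶠ x in l, a ≤ u x}.Nonempty := by
    by_contra hempty
    rw [not_nonempty_iff_eq_empty.mp hempty, Real.sSup_empty] at h
    exact lt_irrefl 0 h
  obtain ⟨δ, hδ, hδpos⟩ := exists_lt_of_lt_csSup hne h
  exact ⟨δ, hδpos, hδ⟩

theorem Filter.exists_lt_one_eventually_le_mul_of_liminf_sub_pos {X : Type*} {l : Filter X}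
    {u v : X → ℝ} {C : ℝ} (hu : ∀ᶠ x in l, u x ≤ C) (h : 0 < liminf (fun x => u x - v x) l) :
    ∃ ρ < 1, ∀ᶠ x in l, v x ≤ ρ * u x := by
  obtain ⟨δ, hδ, hδuv⟩ := exists_pos_forall_eventually_le_of_liminf_pos h
  have hC : 0 < max C δ := hδ.trans_le (le_max_right _ _)
  refine ⟨1 - δ / max C δ, sub_lt_self _ (div_pos hδ hC), ?_⟩
  filter_upwards [hu, hδuv] with x hux hx
  have : δ / max C δ * u x ≤ δ := by
    rw [div_mul_eq_mul_div, div_le_iff₀ hC]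
    exact mul_le_mul_of_nonneg_left (hux.trans (le_max_left _ _)) hδ.le
  linarith

theorem exists_forall_notMem_Icc_of_eventually {P : ℝ → Prop} (h₀ : ∀ᶠ t in 𝓝[>] 0, P t)
    (hinf : ∀ᶠ t in atTop, P t) : ∃ m M, 0 < m ∧ ∀ t > 0, t ∉ Icc m M → P t := by
  obtain ⟨m, hm, hm₀⟩ := mem_nhdsGT_iff_exists_Ioc_subset.mp h₀
  obtain ⟨M, hM⟩ := eventually_atTop.mp hinf
  refine ⟨m, max m M, hm, fun t ht hnot => ?_⟩
  rcases le_or_gt t m with htm | htm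
  · exact hm₀ ⟨ht, htm⟩
  · exact hM t ((le_max_right m M).trans (not_le.mp fun h => hnot ⟨htm.le, h⟩).le)

theorem exists_prod_orbit_le {α c : ℝ → ℝ} {C ρ : ℝ} (hα : ContinuousOn α (Ioi 0))
    (hmaps : MapsTo α (Ioi 0) (Ioi 0)) (hfix : ∀ t ∈ Ioi 0, α t ≠ t)
    (hc0 : ∀ t ∈ Ioi 0, 0 ≤ c t) (hcC : ∀ t ∈ Ioi 0, c t ≤ C) (hρ : 0 < ρ)
    (h₀ : ∀ᶠ t in 𝓝[>] 0, c t ≤ ρ) (hinf : ∀ᶠ t in atTop, c t ≤ ρ) :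
    ∃ K, 0 ≤ K ∧ ∀ t ∈ Ioi 0, ∀ n, ∏ k ∈ Finset.range n, c (α^[k] t) ≤ K * ρ ^ n := by
  obtain ⟨m, M, hm, hmM⟩ := exists_forall_notMem_Icc_of_eventually h₀ hinf
  obtain ⟨N, hN⟩ := exists_card_orbit_visits_le isPreconnected_Ioi hα hmaps hfix
    fun x hx => hm.trans_le hx.1
  refine ⟨(max C ρ / ρ) ^ N, pow_nonneg (div_nonneg (hρ.le.trans (le_max_right _ _)) hρ.le) _,
    fun t ht n => ?_⟩
  have horb : ∀ k, α^[k] t ∈ Ioi 0 := fun k => hmaps.iterate k ht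
  simpa using Finset.prod_le_div_pow_mul_pow _ (fun k => α^[k] t ∈ Icc m M)
    (fun k _ => hc0 _ (horb k)) (fun k _ => (hcC _ (horb k)).trans (le_max_left _ _))
    (fun k _ => hmM _ (horb k)) (hN t ht n) hρ (le_max_right _ _)

theorem exists_norm_prod_orbit_le {𝕜 : Type*} [NormedField 𝕜] {a b : ℝ → 𝕜} {α α' : ℝ → ℝ}
    {p ε Ca Cb c₀ : ℝ} (hp : 0 < p) (hα : ContinuousOn α (Ioi 0))
    (hmaps : MapsTo α (Ioi 0) (Ioi 0)) (hfix : ∀ t ∈ Ioi 0, α t ≠ t) (hc₀ : 0 < c₀)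
    (hα' : ∀ t ∈ Ioi 0, c₀ ≤ α' t) (hε : 0 < ε) (ha_lb : ∀ t ∈ Ioi 0, ε ≤ ‖a t‖)
    (ha_ub : ∀ t ∈ Ioi 0, ‖a t‖ ≤ Ca) (hb_ub : ∀ t ∈ Ioi 0, ‖b t‖ ≤ Cb)
    (h₀ : 0 < liminf (fun t => ‖a t‖ - ‖b t‖ * α' t ^ (-(1 / p))) (𝓝[>] 0))
    (hinf : 0 < liminf (fun t => ‖a t‖ - ‖b t‖ * α' t ^ (-(1 / p))) atTop) :
    ∃ K ρ, 0 ≤ K ∧ 0 ≤ ρ ∧ ρ < 1 ∧ ∀ n, ∀ t ∈ Ioi 0,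
      ‖∏ k ∈ Finset.range n, (a (α^[k] t))⁻¹ * b (α^[k] t)‖
        ≤ K * ρ ^ n * |∏ k ∈ Finset.range n, α' (α^[k] t)| ^ (1 / p) := by
  have hα'pos : ∀ t ∈ Ioi 0, 0 < α' t := fun t ht => hc₀.trans_le (hα' t ht)
  have hapos : ∀ t ∈ Ioi 0, 0 < ‖a t‖ := fun t ht => hε.trans_le (ha_lb t ht)
  set c : ℝ → ℝ := fun t => ‖b t‖ * α' t ^ (-(1 / p)) / ‖a t‖
  have hc0 : ∀ t ∈ Ioi 0, 0 ≤ c t := fun t ht => by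
    have := hα'pos t ht
    positivity
  have hcC : ∀ t ∈ Ioi 0, c t ≤ Cb * c₀ ^ (-(1 / p)) / ε := fun t ht => by
    have hrpow : α' t ^ (-(1 / p)) ≤ c₀ ^ (-(1 / p)) :=
      Real.rpow_le_rpow_of_nonpos hc₀ (hα' t ht) (by simp [hp.le])
    have hCb : 0 ≤ Cb := (norm_nonneg _).trans (hb_ub t ht)
    exact div_le_div₀ (mul_nonneg hCb (Real.rpow_nonneg hc₀.le _)) (mul_le_mul (hb_ub t ht) hrpow
      (Real.rpow_nonneg (hα'pos t ht).le _) hCb) hε (ha_lb t ht)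
  have hc_ev : ∀ l, l ≤ 𝓟 (Ioi 0) →
      0 < liminf (fun t => ‖a t‖ - ‖b t‖ * α' t ^ (-(1 / p))) l →
      ∃ ρ < 1, ∀ᶠ t in l, c t ≤ ρ := fun l hl h => by
    obtain ⟨ρ, hρ1, hρ⟩ := exists_lt_one_eventually_le_mul_of_liminf_sub_pos
      (hl ha_ub) h
    refine ⟨ρ, hρ1, ?_⟩
    filter_upwards [hρ, hl (mem_principal_self _)] with t ht htpos
    exact (div_le_iff₀ (hapos t htpos)).mpr ht
  obtain ⟨ρ₀, hρ₀, hc_ev₀⟩ := hc_ev _ inf_le_right h₀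
  obtain ⟨ρ₁, hρ₁, hc_ev₁⟩ := hc_ev _ (le_principal_iff.mpr (Ioi_mem_atTop 0)) hinf
  set ρ := max (max ρ₀ ρ₁) (1 / 2)
  obtain ⟨K, hK0, hK⟩ := exists_prod_orbit_le (ρ := ρ) hα hmaps hfix hc0 hcC (by positivity)
    (hc_ev₀.mono fun t ht => ht.trans ((le_max_left _ _).trans (le_max_left _ _)))
    (hc_ev₁.mono fun t ht => ht.trans ((le_max_right _ _).trans (le_max_left _ _)))
  refine ⟨K, ρ, hK0, by positivity, max_lt (max_lt hρ₀ hρ₁) (by norm_num), fun n t ht => ?_⟩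
  have horb : ∀ k, α^[k] t ∈ Ioi 0 := fun k => hmaps.iterate k ht
  have hweight : ∀ s ∈ Ioi 0, ‖(a s)⁻¹ * b s‖ = c s * α' s ^ (1 / p) := fun s hs => by
    rw [norm_mul, norm_inv, div_mul_eq_mul_div, mul_assoc, ← Real.rpow_add (hα'pos s hs),
      neg_add_cancel, Real.rpow_zero, mul_one, inv_mul_eq_div]
  rw [norm_prod, Finset.prod_congr rfl fun k _ => hweight _ (horb k), Finset.prod_mul_distrib,
    abs_of_pos (Finset.prod_pos fun k _ => hα'pos _ (horb k)),
    Real.finsetProd_rpow _ _ fun k _ => (hα'pos _ (horb k)).le]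
  exact mul_le_mul_of_nonneg_right (hK t ht n)
    (Real.rpow_nonneg (Finset.prod_nonneg fun k _ => (hα'pos _ (horb k)).le) _)

theorem map_volume_restrict_absolutelyContinuous {s : Set ℝ} {f f' : ℝ → ℝ} {c : ℝ}
    (hs : MeasurableSet s) (hf' : ∀ x ∈ s, HasDerivWithinAt f (f' x) s x) (hinj : InjOn f s)
    (hmaps : MapsTo f s s) (hc : 0 < c) (hcf' : ∀ x ∈ s, c ≤ |f' x|) :
    (volume.restrict s).map f ≪ volume.restrict s := by
  refine Measure.AbsolutelyContinuous.mk fun M hM hM0 => ?_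
  have hf : AEMeasurable f (volume.restrict s) :=
    ContinuousOn.aemeasurable (fun x hx => (hf' x hx).continuousWithinAt) hs
  have hbound : ENNReal.ofReal c * (volume.restrict s).map f M ≤ 0 := calc
    ENNReal.ofReal c * (volume.restrict s).map f M
        = ∫⁻ x in s, ENNReal.ofReal c * M.indicator 1 (f x) := by
      rw [lintegral_const_mul' _ _ ENNReal.ofReal_ne_top,
        ← lintegral_map' (measurable_one.indicator hM).aemeasurable hf, lintegral_indicator_one hM]
    _ ≤ ∫⁻ x in s, ENNReal.ofReal |f' x| * M.indicator 1 (f x) := by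
      refine lintegral_mono_ae ((ae_restrict_mem hs).mono fun x hx => ?_)
      gcongr
      exact hcf' x hx
    _ = volume.restrict (f '' s) M := by
      rw [← lintegral_image_eq_lintegral_abs_deriv_mul hs hf' hinj, lintegral_indicator_one hM]
    _ ≤ volume.restrict s M := Measure.restrict_mono (image_subset_iff.mpr hmaps) le_rfl M
    _ = 0 := hM0
  exact (mul_eq_zero.mp (nonpos_iff_eq_zero.mp hbound)).resolve_left
    (ENNReal.ofReal_pos.mpr hc).ne'

theorem eLpNorm_mul_comp_le {𝕜 : Type*} [NormedDivisionRing 𝕜] {s : Set ℝ} {β β' : ℝ → ℝ}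
    (hs : MeasurableSet s) (hβ' : ∀ x ∈ s, HasDerivWithinAt β (β' x) s x) (hinj : InjOn β s)
    (hmaps : MapsTo β s s) {p : ℝ} (hp : 0 < p) {w : ℝ → 𝕜} {K : ℝ}
    (hw : ∀ x ∈ s, ‖w x‖ ≤ K * |β' x| ^ (1 / p)) (f : ℝ → 𝕜) :
    eLpNorm (fun x => w x * f (β x)) (ENNReal.ofReal p) (volume.restrict s)
      ≤ ENNReal.ofReal K * eLpNorm f (ENNReal.ofReal p) (volume.restrict s) := by
  simp only [eLpNorm_eq_lintegral_rpow_enorm_toReal (ENNReal.ofReal_pos.mpr hp).ne'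
    ENNReal.ofReal_ne_top, ENNReal.toReal_ofReal hp.le]
  have hpoint : ∀ x ∈ s, ‖w x * f (β x)‖ₑ ^ p
      ≤ ENNReal.ofReal K ^ p * (ENNReal.ofReal |β' x| * ‖f (β x)‖ₑ ^ p) := fun x hx => by
    have hwx : ‖w x‖ₑ ≤ ENNReal.ofReal K * ENNReal.ofReal (|β' x| ^ (1 / p)) := by
      rw [← ENNReal.ofReal_mul' (by positivity), ← ofReal_norm]
      exact ENNReal.ofReal_le_ofReal (hw x hx)
    calc ‖w x * f (β x)‖ₑ ^ p = ‖w x‖ₑ ^ p * ‖f (β x)‖ₑ ^ p := by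
          rw [enorm_mul, ENNReal.mul_rpow_of_nonneg _ _ hp.le]
      _ ≤ (ENNReal.ofReal K * ENNReal.ofReal (|β' x| ^ (1 / p))) ^ p * ‖f (β x)‖ₑ ^ p := by
          gcongr
      _ = ENNReal.ofReal K ^ p * (ENNReal.ofReal |β' x| * ‖f (β x)‖ₑ ^ p) := by
          rw [ENNReal.mul_rpow_of_nonneg _ _ hp.le,
            ENNReal.ofReal_rpow_of_nonneg (x := |β' x| ^ (1 / p)) (by positivity) hp.le,
            ← Real.rpow_mul (abs_nonneg _), one_div_mul_cancel hp.ne', Real.rpow_one, mul_assoc]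
  have hint : ∫⁻ x in s, ‖w x * f (β x)‖ₑ ^ p
      ≤ ENNReal.ofReal K ^ p * ∫⁻ x in s, ‖f x‖ₑ ^ p := calc
    _ ≤ ∫⁻ x in s, ENNReal.ofReal K ^ p * (ENNReal.ofReal |β' x| * ‖f (β x)‖ₑ ^ p) :=
        lintegral_mono_ae ((ae_restrict_mem hs).mono hpoint)
    _ = ENNReal.ofReal K ^ p * ∫⁻ x in β '' s, ‖f x‖ₑ ^ p := by
        rw [lintegral_const_mul' _ _ (ENNReal.rpow_ne_top_of_nonneg hp.le ENNReal.ofReal_ne_top),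
          lintegral_image_eq_lintegral_abs_deriv_mul hs hβ' hinj]
    _ ≤ ENNReal.ofReal K ^ p * ∫⁻ x in s, ‖f x‖ₑ ^ p := by
        gcongr
        exact image_subset_iff.mpr hmaps
  calc (∫⁻ x in s, ‖w x * f (β x)‖ₑ ^ p) ^ (1 / p)
      ≤ (ENNReal.ofReal K ^ p * ∫⁻ x in s, ‖f x‖ₑ ^ p) ^ (1 / p) := by gcongr
    _ = ENNReal.ofReal K * (∫⁻ x in s, ‖f x‖ₑ ^ p) ^ (1 / p) := by
        rw [ENNReal.mul_rpow_of_nonneg _ _ (by positivity), ← ENNReal.rpow_mul,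
          mul_one_div_cancel hp.ne', ENNReal.rpow_one]

theorem MeasureTheory.Lp.opNorm_le_of_eLpNorm_le {X 𝕜 : Type*} [MeasurableSpace X]
    {μ : Measure X} {p : ℝ≥0∞} [Fact (1 ≤ p)] [NontriviallyNormedField 𝕜]
    (T : Lp 𝕜 p μ →L[𝕜] Lp 𝕜 p μ) {F : Lp 𝕜 p μ → X → 𝕜} (hT : ∀ f, T f =ᵐ[μ] F f) {K : ℝ}
    (hK : 0 ≤ K) (hF : ∀ f : Lp 𝕜 p μ, eLpNorm (F f) p μ ≤ ENNReal.ofReal K * eLpNorm f p μ) : ‖T‖ ≤ K := by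
  refine T.opNorm_le_bound hK fun f => ?_
  rw [Lp.norm_def, Lp.norm_def, eLpNorm_congr_ae (hT f), ← ENNReal.toReal_ofReal hK,
    ← ENNReal.toReal_mul]
  exact ENNReal.toReal_mono (ENNReal.mul_ne_top ENNReal.ofReal_ne_top (Lp.eLpNorm_ne_top f)) (hF f)

section Lp

variable {X 𝕜 : Type*} [MeasurableSpace X] {μ : Measure X} {p : ℝ≥0∞} [Fact (1 ≤ p)]
  [NormedField 𝕜]

theorem MeasureTheory.Lp.mul_eq_one_of_ae_eq_mul {T S : Lp 𝕜 p μ →L[𝕜] Lp 𝕜 p μ} {u v : X → 𝕜}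
    (hT : ∀ f, T f =ᵐ[μ] fun x => u x * f x) (hS : ∀ f, S f =ᵐ[μ] fun x => v x * f x)
    (huv : ∀ᵐ x ∂μ, u x * v x = 1) : T * S = 1 := by
  refine ContinuousLinearMap.ext fun f => Lp.ext ?_
  filter_upwards [hT (S f), hS f, huv] with x hTx hSx hx
  rw [mul_apply_eq_comp, hTx, hSx, ← mul_assoc, hx, one_mul, one_apply_eq_self]

theorem MeasureTheory.Lp.pow_apply_ae_eq {A : Lp 𝕜 p μ →L[𝕜] Lp 𝕜 p μ} {c : X → 𝕜} {β : X → X}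
    (hβ : AEMeasurable β μ) (hβμ : μ.map β ≪ μ) (hA : ∀ f, A f =ᵐ[μ] fun x => c x * f (β x))
    (n : ℕ) (f : Lp 𝕜 p μ) :
    (A ^ n) f =ᵐ[μ] fun x => (∏ k ∈ Finset.range n, c (β^[k] x)) * f (β^[n] x) := by
  induction n with
  | zero => simp
  | succ n ih =>
    have ih_β := ae_of_ae_map hβ (hβμ.ae_le ih)
    filter_upwards [hA ((A ^ n) f), ih_β] with x hx hxn
    rw [pow_succ', mul_apply_eq_comp, hx, hxn, Finset.prod_range_succ',
      Function.iterate_succ_apply]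
    simp only [← Function.iterate_succ_apply, Function.iterate_zero_apply]
    ring

end Lp

theorem norm_pow_le_of_ae_eq_mul_comp {𝕜 : Type*} [NontriviallyNormedField 𝕜] {s : Set ℝ}
    {p : ℝ} (hp : 0 < p) [Fact (1 ≤ ENNReal.ofReal p)]
    {A : Lp 𝕜 (ENNReal.ofReal p) (volume.restrict s) →L[𝕜]
      Lp 𝕜 (ENNReal.ofReal p) (volume.restrict s)}
    {c : ℝ → 𝕜} {α α' : ℝ → ℝ} {c₀ K ρ : ℝ} (hs : MeasurableSet s) (hinj : InjOn α s)
    (hmaps : MapsTo α s s) (hα : ∀ t ∈ s, HasDerivAt α (α' t) t) (hc₀ : 0 < c₀)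
    (hα' : ∀ t ∈ s, c₀ ≤ α' t) (hA : ∀ f, A f =ᵐ[volume.restrict s] fun t => c t * f (α t))
    (hK : 0 ≤ K) (hρ : 0 ≤ ρ) (hweight : ∀ n, ∀ t ∈ s, ‖∏ k ∈ Finset.range n, c (α^[k] t)‖
      ≤ K * ρ ^ n * |∏ k ∈ Finset.range n, α' (α^[k] t)| ^ (1 / p)) (n : ℕ) :
    ‖A ^ n‖ ≤ K * ρ ^ n := by
  have hα_ac := map_volume_restrict_absolutelyContinuous hs
    (fun t ht => (hα t ht).hasDerivWithinAt) hinj hmaps hc₀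
    fun t ht => (hα' t ht).trans (le_abs_self _)
  have hα_meas : AEMeasurable α (volume.restrict s) :=
    ContinuousOn.aemeasurable (fun t ht => (hα t ht).continuousAt.continuousWithinAt) hs
  exact Lp.opNorm_le_of_eLpNorm_le _ (Lp.pow_apply_ae_eq hα_meas hα_ac hA n) (by positivity)
    fun f => eLpNorm_mul_comp_le hs
      (fun t ht => (hasDerivAt_iterate hmaps hα n ht).hasDerivWithinAt)
      (hinj.iterate hmaps n) (hmaps.iterate n) hp (hweight n) f


theorem binomial_functional_operator_invertible_general
    (p : ℝ) (hp : 1 < p) [Fact (1 ≤ ENNReal.ofReal p)]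
    (μ : Measure ℝ) (hμ : μ = volume.restrict (Set.Ioi 0))
    (a b : ℝ → ℂ) (α α' : ℝ → ℝ)
    (ha : SO a) (hb : SO b)
    (hbij : Set.BijOn α (Set.Ioi 0) (Set.Ioi 0))
    (hmono : StrictMonoOn α (Set.Ioi 0))
    (hderiv : ∀ t ∈ Set.Ioi (0:ℝ), HasDerivAt α (α' t) t)
    (hfix : ∀ t ∈ Set.Ioi (0:ℝ), α t ≠ t)
    (hlog_bdd : ∃ C, ∀ t ∈ Set.Ioi (0:ℝ), |Real.log (α' t)| ≤ C)
    (hso : SO α')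
    -- the ellipticity conditions (1.2):
    (hinfa : ∃ ε > (0:ℝ), ∀ t ∈ Set.Ioi (0:ℝ), ε ≤ ‖a t‖)
    (hliminf0 : 0 < Filter.liminf
      (fun t => ‖a t‖ - ‖b t‖ * (α' t) ^ (-(1/p)))
      (nhdsWithin 0 (Set.Ioi 0)))
    (hliminf_inf : 0 < Filter.liminf
      (fun t => ‖a t‖ - ‖b t‖ * (α' t) ^ (-(1/p))) atTop)
    -- the operators on `L^p(0,∞)`:
    (Ma Mb Minv W : Lp ℂ (ENNReal.ofReal p) μ →L[ℂ] Lp ℂ (ENNReal.ofReal p) μ)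
    (hMa : ∀ f : Lp ℂ (ENNReal.ofReal p) μ, (Ma f : ℝ → ℂ) =ᵐ[μ] fun t => a t * f t)
    (hMb : ∀ f : Lp ℂ (ENNReal.ofReal p) μ, (Mb f : ℝ → ℂ) =ᵐ[μ] fun t => b t * f t)
    (hMinv : ∀ f : Lp ℂ (ENNReal.ofReal p) μ,
      (Minv f : ℝ → ℂ) =ᵐ[μ] fun t => (a t)⁻¹ * f t)
    (hW : ∀ f : Lp ℂ (ENNReal.ofReal p) μ, (W f : ℝ → ℂ) =ᵐ[μ] fun t => f (α t)) :
    ∃ B : Lp ℂ (ENNReal.ofReal p) μ →L[ℂ] Lp ℂ (ENNReal.ofReal p) μ,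
      HasSum (fun n : ℕ => (Minv * (Mb * W)) ^ n * Minv) B ∧
      (Ma - Mb * W) * B = 1 ∧ B * (Ma - Mb * W) = 1 := by
  subst hμ
  have hp₀ : 0 < p := one_pos.trans hp
  obtain ⟨C, hC⟩ := hlog_bdd
  obtain ⟨ε, hε, hεa⟩ := hinfa
  obtain ⟨Ca, hCa⟩ := ha.2.1
  obtain ⟨Cb, hCb⟩ := hb.2.1
  have hα'_lb : ∀ t ∈ Ioi 0, Real.exp (-C) ≤ α' t := fun t ht =>
    hmono.exp_neg_le_deriv hderiv hso.1 hC ht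
  obtain ⟨K, ρ, hK, hρ₀, hρ₁, hweight⟩ := exists_norm_prod_orbit_le hp₀
    (fun t ht => (hderiv t ht).continuousAt.continuousWithinAt) hbij.mapsTo hfix
    (Real.exp_pos (-C)) hα'_lb hε hεa hCa hCb hliminf0 hliminf_inf
  set A := Minv * (Mb * W)
  have hA : ∀ f, A f =ᵐ[volume.restrict (Ioi 0)] fun t => (a t)⁻¹ * b t * f (α t) := fun f => by
    filter_upwards [hMinv (Mb (W f)), hMb (W f), hW f] with t h₁ h₂ h₃
    rw [mul_apply_eq_comp, mul_apply_eq_comp, h₁, h₂, h₃, mul_assoc]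
  have hsum : Summable (A ^ ·) := .of_norm_bounded
    ((summable_geometric_of_lt_one hρ₀ hρ₁).mul_left K)
    (norm_pow_le_of_ae_eq_mul_comp hp₀ measurableSet_Ioi hbij.injOn hbij.mapsTo hderiv
      (Real.exp_pos (-C)) hα'_lb hA hK hρ₀ hweight)
  have ha_ne : ∀ᵐ t ∂volume.restrict (Ioi 0), a t ≠ 0 :=
    (ae_restrict_mem measurableSet_Ioi).mono fun t ht => norm_pos_iff.mp (hε.trans_le (hεa t ht))
  have hMaMinv : Ma * Minv = 1 :=
    Lp.mul_eq_one_of_ae_eq_mul hMa hMinv (ha_ne.mono fun t => mul_inv_cancel₀)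
  have hMinvMa : Minv * Ma = 1 :=
    Lp.mul_eq_one_of_ae_eq_mul hMinv hMa (ha_ne.mono fun t => inv_mul_cancel₀)
  have hfactor : Ma - Mb * W = Ma * (1 - A) := by
    rw [mul_sub, mul_one, ← mul_assoc, hMaMinv, one_mul]
  refine ⟨(∑' n, A ^ n) * Minv, hsum.hasSum.mul_right Minv, ?_, ?_⟩
  · rw [hfactor, mul_assoc, ← mul_assoc (1 - A), hsum.one_sub_mul_tsum_pow, one_mul, hMaMinv]
  · rw [hfactor, mul_assoc, ← mul_assoc Minv, hMinvMa, one_mul, hsum.tsum_pow_mul_one_sub]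

/-- Invertibility of the binomial functional operator `aI - bW_α` on `L^p(0,∞)`
under condition (1.2), with the inverse given by the Neumann series. -/
theorem binomial_functional_operator_invertible
    (p : ℝ) (hp : 1 < p) [Fact (1 ≤ ENNReal.ofReal p)]
    (μ : Measure ℝ) (hμ : μ = volume.restrict (Set.Ioi 0))
    (a b : ℝ → ℂ) (α α' : ℝ → ℝ)
    (ha : SO a) (hb : SO b)
    (hbij : Set.BijOn α (Set.Ioi 0) (Set.Ioi 0))
    (hmono : StrictMonoOn α (Set.Ioi 0))
    (hderiv : ∀ t ∈ Set.Ioi (0:ℝ), HasDerivAt α (α' t) t)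
    (h0 : Tendsto α (nhdsWithin 0 (Set.Ioi 0)) (nhds 0))
    (hinf : Tendsto α atTop atTop)
    (hfix : ∀ t ∈ Set.Ioi (0:ℝ), α t ≠ t)
    (hlog_bdd : ∃ C, ∀ t ∈ Set.Ioi (0:ℝ), |Real.log (α' t)| ≤ C)
    (hso : SO α')
    -- the ellipticity conditions (1.2):
    (hinfa : ∃ ε > (0:ℝ), ∀ t ∈ Set.Ioi (0:ℝ), ε ≤ ‖a t‖)
    (hliminf0 : 0 < Filter.liminf
      (fun t => ‖a t‖ - ‖b t‖ * (α' t) ^ (-(1/p)))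
      (nhdsWithin 0 (Set.Ioi 0)))
    (hliminf_inf : 0 < Filter.liminf
      (fun t => ‖a t‖ - ‖b t‖ * (α' t) ^ (-(1/p))) atTop)
    -- the operators on `L^p(0,∞)`:
    (Ma Mb Minv W : Lp ℂ (ENNReal.ofReal p) μ →L[ℂ] Lp ℂ (ENNReal.ofReal p) μ)
    (hMa : ∀ f : Lp ℂ (ENNReal.ofReal p) μ, (Ma f : ℝ → ℂ) =ᵐ[μ] fun t => a t * f t)
    (hMb : ∀ f : Lp ℂ (ENNReal.ofReal p) μ, (Mb f : ℝ → ℂ) =ᵐ[μ] fun t => b t * f t)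
    (hMinv : ∀ f : Lp ℂ (ENNReal.ofReal p) μ,
      (Minv f : ℝ → ℂ) =ᵐ[μ] fun t => (a t)⁻¹ * f t)
    (hW : ∀ f : Lp ℂ (ENNReal.ofReal p) μ, (W f : ℝ → ℂ) =ᵐ[μ] fun t => f (α t)) :
    ∃ B : Lp ℂ (ENNReal.ofReal p) μ →L[ℂ] Lp ℂ (ENNReal.ofReal p) μ,
      HasSum (fun n : ℕ => (Minv * (Mb * W)) ^ n * Minv) B ∧
      (Ma - Mb * W) * B = 1 ∧ B * (Ma - Mb * W) = 1 :=
  binomial_functional_operator_invertible_general p hp μ hμ a b α α' ha hb hbij hmono hderiv hfix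
    hlog_bdd hso hinfa hliminf0 hliminf_inf Ma Mb Minv W hMa hMb hMinv hW
end

section
/- Let 1 < p < ∞, β ∈ ℂ with Re β ∈ (0,2π), and r_{p,β}(x) = e^{(x+i/p)(π−β)} / sinh(π(x+i/p)) for x ∈ ℝ. Then r_{p,β} is a function of finite total variation on ℝ; in particular sup_x |x + i/p|^j |r_{p,β}(x)| < ∞ and ∫_ℝ |x + i/p|^j |r_{p,β}(x)| dx < ∞ for every nonnegative integer j, and sup_x |coth(π(x+i/p))| < ∞. -/
/-!
For `z = x + i/p` one has `|sinh (π z)| ≥ sin (π/p) cosh (π x)` and `|cosh (π z)| ≤ cosh (π x)`.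
Hence `|coth (π z)| ≤ 1 / sin (π/p)`, and `|r_{p,β}(x)| ≲ e^{(π - Re β) x} / cosh (π x)` decays like
`e^{-(π - |π - Re β|)|x|}`, which beats every polynomial weight. The logarithmic derivative
`r'/r = (π - β) - π coth (π (x + i/p))` is bounded, so `r'` is integrable and the variation of `r`
is at most `∫ |r'|`.
-/

open Filter Complex MeasureTheory

/-- `r_{p,β}(x) = e^{(x+i/p)(π-β)} / sinh(π(x+i/p))`. -/
noncomputable def rPB (p : ℝ) (β : ℂ) (x : ℝ) : ℂ :=
  Complex.exp ((x + Complex.I / p) * ((Real.pi : ℂ) - β)) /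
    Complex.sinh ((Real.pi : ℂ) * (x + Complex.I / p))

theorem boundedVariationOn_univ_of_hasDerivAt_of_integrable {E : Type*} [NormedAddCommGroup E]
    [NormedSpace ℝ E] [CompleteSpace E] {f f' : ℝ → E} (hf : ∀ x, HasDerivAt f (f' x) x)
    (hf' : Integrable f') : BoundedVariationOn f Set.univ := by
  refine ne_top_of_le_ne_top (ENNReal.ofReal_ne_top (r := ∫ x, ‖f' x‖)) (iSup_le ?_)
  rintro ⟨n, u, hu, -⟩
  calc ∑ i ∈ Finset.range n, edist (f (u (i + 1))) (f (u i))
      ≤ ∑ i ∈ Finset.range n, ENNReal.ofReal (∫ t in u i..u (i + 1), ‖f' t‖) := by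
        refine Finset.sum_le_sum fun i _ => ?_
        rw [edist_dist, dist_eq_norm, ← intervalIntegral.integral_eq_sub_of_hasDerivAt
          (fun t _ => hf t) hf'.intervalIntegrable]
        exact ENNReal.ofReal_le_ofReal
          (intervalIntegral.norm_integral_le_integral_norm (hu (Nat.le_succ i)))
    _ = ENNReal.ofReal (∫ t in u 0..u n, ‖f' t‖) := by
        rw [← ENNReal.ofReal_sum_of_nonneg fun i _ => intervalIntegral.integral_nonneg
          (hu (Nat.le_succ i)) fun t _ => norm_nonneg _,
          intervalIntegral.sum_integral_adjacent_intervals fun i _ => hf'.norm.intervalIntegrable]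
    _ ≤ ENNReal.ofReal (∫ t, ‖f' t‖) := by
        rw [intervalIntegral.integral_of_le (hu (Nat.zero_le n))]
        exact ENNReal.ofReal_le_ofReal
          (setIntegral_le_integral hf'.norm (Eventually.of_forall fun t => norm_nonneg _))

theorem integrable_of_one_add_abs_sq_mul_norm_le {E : Type*} [NormedAddCommGroup E]
    {f : ℝ → E} (hf : AEStronglyMeasurable f) {C : ℝ}
    (h : ∀ x, (1 + |x|) ^ 2 * ‖f x‖ ≤ C) : Integrable f := by
  refine (integrable_inv_one_add_sq.const_mul C).mono' hf (Eventually.of_forall fun x => ?_)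
  have hsq : 1 + x ^ 2 ≤ (1 + |x|) ^ 2 := by nlinarith [abs_nonneg x, sq_abs x]
  rw [← div_eq_mul_inv, le_div_iff₀ (by positivity)]
  calc ‖f x‖ * (1 + x ^ 2) ≤ (1 + |x|) ^ 2 * ‖f x‖ := by nlinarith [norm_nonneg (f x)]
    _ ≤ C := h x

theorem one_add_abs_pow_mul_exp_neg_mul_abs_le {δ : ℝ} (hδ : 0 < δ) (n : ℕ) (x : ℝ) :
    (1 + |x|) ^ n * Real.exp (-(δ * |x|)) ≤ n.factorial / δ ^ n * Real.exp δ := by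
  have h := Real.pow_div_factorial_le_exp (x := δ * (1 + |x|)) (by positivity) n
  rw [div_le_iff₀ (by positivity), mul_pow] at h
  rw [div_mul_eq_mul_div, le_div_iff₀ (by positivity)]
  calc (1 + |x|) ^ n * Real.exp (-(δ * |x|)) * δ ^ n
      = δ ^ n * (1 + |x|) ^ n * Real.exp (-(δ * |x|)) := by ring
    _ ≤ Real.exp (δ * (1 + |x|)) * n.factorial * Real.exp (-(δ * |x|)) := by gcongr
    _ = n.factorial * Real.exp δ := by
        rw [mul_right_comm, ← Real.exp_add]; ring_nf

theorem Real.exp_mul_le_two_mul_cosh_mul_exp (a : ℝ) {c : ℝ} (hc : 0 ≤ c) (x : ℝ) :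
    Real.exp (a * x) ≤ 2 * Real.cosh (c * x) * Real.exp (-((c - |a|) * |x|)) := by
  have hcosh : Real.exp (c * |x|) ≤ 2 * Real.cosh (c * x) := by
    rw [← Real.cosh_abs, abs_mul, abs_of_nonneg hc, Real.cosh_eq]
    linarith [Real.exp_pos (-(c * |x|))]
  calc Real.exp (a * x) ≤ Real.exp (c * |x|) * Real.exp (-((c - |a|) * |x|)) := by
        rw [← Real.exp_add, Real.exp_le_exp]
        nlinarith [neg_abs_le a, le_abs_self a, abs_nonneg x, le_abs_self x, neg_abs_le x,
          abs_mul_abs_self x, abs_mul a x, le_abs_self (a * x)]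
    _ ≤ 2 * Real.cosh (c * x) * Real.exp (-((c - |a|) * |x|)) := by gcongr

theorem Complex.im_sinh (z : ℂ) : (sinh z).im = Real.cosh z.re * Real.sin z.im := by
  simp [Complex.sinh, Complex.exp_im, Real.cosh_eq]
  ring

theorem Complex.abs_sin_im_mul_cosh_re_le_norm_sinh (z : ℂ) :
    |Real.sin z.im| * Real.cosh z.re ≤ ‖sinh z‖ := by
  simpa [Complex.im_sinh, abs_mul, abs_of_pos (Real.cosh_pos z.re), mul_comm] using
    Complex.abs_im_le_norm (sinh z)

theorem Complex.norm_cosh_le_cosh_re (z : ℂ) : ‖cosh z‖ ≤ Real.cosh z.re := by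
  rw [Complex.cosh, Real.cosh_eq, norm_div, Complex.norm_two]
  gcongr
  simpa [Complex.norm_exp] using norm_add_le (exp z) (exp (-z))

theorem Complex.norm_cosh_div_sinh_le {z : ℂ} (hz : Real.sin z.im ≠ 0) :
    ‖cosh z / sinh z‖ ≤ |Real.sin z.im|⁻¹ := by
  have hpos : 0 < |Real.sin z.im| * Real.cosh z.re := by positivity
  rw [norm_div, div_le_iff₀ (hpos.trans_le (abs_sin_im_mul_cosh_re_le_norm_sinh z))]
  calc ‖cosh z‖ ≤ Real.cosh z.re := norm_cosh_le_cosh_re z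
    _ = |Real.sin z.im|⁻¹ * (|Real.sin z.im| * Real.cosh z.re) := by
        field_simp
    _ ≤ |Real.sin z.im|⁻¹ * ‖sinh z‖ := by
        gcongr; exact abs_sin_im_mul_cosh_re_le_norm_sinh z

theorem re_pi_mul_add_I_div (p x : ℝ) : ((Real.pi : ℂ) * (x + I / p)).re = Real.pi * x := by
  simp

theorem im_pi_mul_add_I_div (p x : ℝ) : ((Real.pi : ℂ) * (x + I / p)).im = Real.pi / p := by
  rw [div_ofReal]
  simp [div_eq_mul_inv]

section
variable {p : ℝ} {β : ℂ}

theorem sin_pi_div_pos (hp : 1 < p) : 0 < Real.sin (Real.pi / p) :=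
  Real.sin_pos_of_pos_of_lt_pi (div_pos Real.pi_pos (by linarith)) (div_lt_self Real.pi_pos hp)

theorem sinh_pi_mul_add_I_div_ne_zero (hp : 1 < p) (x : ℝ) :
    sinh ((Real.pi : ℂ) * (x + I / p)) ≠ 0 := by
  have h := abs_sin_im_mul_cosh_re_le_norm_sinh ((Real.pi : ℂ) * (x + I / p))
  rw [im_pi_mul_add_I_div, abs_of_pos (sin_pi_div_pos hp)] at h
  exact norm_pos_iff.mp ((mul_pos (sin_pi_div_pos hp) (Real.cosh_pos _)).trans_le h)

theorem norm_coth_pi_mul_add_I_div_le (hp : 1 < p) (x : ℝ) :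
    ‖cosh ((Real.pi : ℂ) * (x + I / p)) / sinh ((Real.pi : ℂ) * (x + I / p))‖ ≤
      (Real.sin (Real.pi / p))⁻¹ := by
  have h := norm_cosh_div_sinh_le (z := (Real.pi : ℂ) * (x + I / p))
  rw [im_pi_mul_add_I_div, abs_of_pos (sin_pi_div_pos hp)] at h
  exact h (sin_pi_div_pos hp).ne'

theorem norm_add_I_div_le (hp : 1 ≤ p) (x : ℝ) : ‖(x : ℂ) + I / p‖ ≤ 1 + |x| := by
  calc ‖(x : ℂ) + I / p‖ ≤ |x| + |p|⁻¹ := by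
        simpa using norm_add_le (x : ℂ) (I / p)
    _ ≤ 1 + |x| := by
        rw [abs_of_pos (show 0 < p by linarith)]
        linarith [inv_le_one_of_one_le₀ hp]

theorem norm_rPB_le (hp : 1 < p) (x : ℝ) :
    ‖rPB p β x‖ ≤ 2 * Real.exp (β.im / p) / Real.sin (Real.pi / p) *
      Real.exp (-((Real.pi - |Real.pi - β.re|) * |x|)) := by
  have hnum : ‖exp ((x + I / p) * ((Real.pi : ℂ) - β))‖ =
      Real.exp ((Real.pi - β.re) * x) * Real.exp (β.im / p) := by
    rw [norm_exp, ← Real.exp_add, div_ofReal]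
    simp
    ring
  have hden := abs_sin_im_mul_cosh_re_le_norm_sinh ((Real.pi : ℂ) * (x + I / p))
  rw [im_pi_mul_add_I_div, re_pi_mul_add_I_div, abs_of_pos (sin_pi_div_pos hp)] at hden
  have hexp := Real.exp_mul_le_two_mul_cosh_mul_exp (Real.pi - β.re) Real.pi_pos.le x
  have hs := sin_pi_div_pos hp
  rw [rPB, norm_div, hnum, div_le_iff₀ ((mul_pos hs (Real.cosh_pos _)).trans_le hden)]
  calc Real.exp ((Real.pi - β.re) * x) * Real.exp (β.im / p)
      ≤ 2 * Real.cosh (Real.pi * x) * Real.exp (-((Real.pi - |Real.pi - β.re|) * |x|)) *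
          Real.exp (β.im / p) := by gcongr
    _ = 2 * Real.exp (β.im / p) / Real.sin (Real.pi / p) *
          Real.exp (-((Real.pi - |Real.pi - β.re|) * |x|)) *
          (Real.sin (Real.pi / p) * Real.cosh (Real.pi * x)) := by
        field_simp
    _ ≤ _ := by gcongr

theorem exists_one_add_abs_pow_mul_norm_rPB_le (hp : 1 < p)
    (hβ : β.re ∈ Set.Ioo 0 (2 * Real.pi)) (n : ℕ) :
    ∃ C, ∀ x : ℝ, (1 + |x|) ^ n * ‖rPB p β x‖ ≤ C := by
  have hδ : 0 < Real.pi - |Real.pi - β.re| := by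
    rw [sub_pos, abs_lt]; constructor <;> linarith [hβ.1, hβ.2]
  refine ⟨2 * Real.exp (β.im / p) / Real.sin (Real.pi / p) *
    (n.factorial / (Real.pi - |Real.pi - β.re|) ^ n * Real.exp (Real.pi - |Real.pi - β.re|)),
    fun x => ?_⟩
  have hs := sin_pi_div_pos hp
  calc (1 + |x|) ^ n * ‖rPB p β x‖
      ≤ (1 + |x|) ^ n * (2 * Real.exp (β.im / p) / Real.sin (Real.pi / p) *
          Real.exp (-((Real.pi - |Real.pi - β.re|) * |x|))) := by
        gcongr; exact norm_rPB_le hp x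
    _ = 2 * Real.exp (β.im / p) / Real.sin (Real.pi / p) *
          ((1 + |x|) ^ n * Real.exp (-((Real.pi - |Real.pi - β.re|) * |x|))) := by ring
    _ ≤ _ := mul_le_mul_of_nonneg_left (one_add_abs_pow_mul_exp_neg_mul_abs_le hδ n x)
        (by positivity)

theorem exists_one_add_abs_pow_mul_moment_rPB_le (hp : 1 < p)
    (hβ : β.re ∈ Set.Ioo 0 (2 * Real.pi)) (j n : ℕ) :
    ∃ C, ∀ x : ℝ, (1 + |x|) ^ n * (‖(x : ℂ) + I / p‖ ^ j * ‖rPB p β x‖) ≤ C := by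
  obtain ⟨C, hC⟩ := exists_one_add_abs_pow_mul_norm_rPB_le hp hβ (n + j)
  refine ⟨C, fun x => le_trans ?_ (hC x)⟩
  rw [pow_add, mul_assoc]
  gcongr
  exact norm_add_I_div_le hp.le x

theorem continuous_rPB (hp : 1 < p) : Continuous (rPB p β) :=
  Continuous.div (by fun_prop) (by fun_prop) (sinh_pi_mul_add_I_div_ne_zero hp)

theorem hasDerivAt_rPB (hp : 1 < p) (x : ℝ) :
    HasDerivAt (rPB p β) (rPB p β x * (((Real.pi : ℂ) - β) - Real.pi *
      (cosh ((Real.pi : ℂ) * (x + I / p)) / sinh ((Real.pi : ℂ) * (x + I / p))))) x := by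
  have hnum : HasDerivAt (fun w : ℂ => exp ((w + I / p) * ((Real.pi : ℂ) - β)))
      (exp ((x + I / p) * ((Real.pi : ℂ) - β)) * ((Real.pi : ℂ) - β)) x := by
    simpa using (((hasDerivAt_id (x : ℂ)).add_const (I / p)).mul_const _).cexp
  have hden : HasDerivAt (fun w : ℂ => sinh ((Real.pi : ℂ) * (w + I / p)))
      (cosh ((Real.pi : ℂ) * (x + I / p)) * Real.pi) x := by
    simpa using (((hasDerivAt_id (x : ℂ)).add_const (I / p)).const_mul (Real.pi : ℂ)).csinh
  have hsinh := sinh_pi_mul_add_I_div_ne_zero hp x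
  refine ((hnum.div hden hsinh).comp_ofReal).congr_deriv ?_
  simp only [rPB]
  generalize sinh ((Real.pi : ℂ) * (x + I / p)) = S at hsinh ⊢
  field_simp

end

theorem rPB_finite_total_variation (p : ℝ) (hp : 1 < p)
    (β : ℂ) (hβ : β.re ∈ Set.Ioo 0 (2 * Real.pi)) :
    BoundedVariationOn (rPB p β) Set.univ ∧
    (∀ j : ℕ,
      (∃ C, ∀ x : ℝ, ‖(x : ℂ) + Complex.I / p‖ ^ j *
          ‖rPB p β x‖ ≤ C) ∧
      Integrable (fun x : ℝ => ‖(x : ℂ) + Complex.I / p‖ ^ j *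
          ‖rPB p β x‖)) ∧
    (∃ C, ∀ x : ℝ,
      ‖Complex.cosh ((Real.pi : ℂ) * (x + Complex.I / p)) /
        Complex.sinh ((Real.pi : ℂ) * (x + Complex.I / p))‖ ≤ C) := by
  have hmoment (j : ℕ) : Integrable (fun x : ℝ => ‖(x : ℂ) + I / p‖ ^ j * ‖rPB p β x‖) := by
    obtain ⟨C, hC⟩ := exists_one_add_abs_pow_mul_moment_rPB_le hp hβ j 2
    refine integrable_of_one_add_abs_sq_mul_norm_le (C := C)
      (by have := continuous_rPB (β := β) hp; fun_prop) fun x => ?_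
    simpa [Real.norm_of_nonneg (by positivity : 0 ≤ ‖(x : ℂ) + I / p‖ ^ j * ‖rPB p β x‖)]
      using hC x
  have hr : Integrable (rPB p β) :=
    (integrable_norm_iff (continuous_rPB hp).aestronglyMeasurable).mp (by simpa using hmoment 0)
  have hcoth : Continuous fun x : ℝ =>
      cosh ((Real.pi : ℂ) * (x + I / p)) / sinh ((Real.pi : ℂ) * (x + I / p)) :=
    Continuous.div (by fun_prop) (by fun_prop) (sinh_pi_mul_add_I_div_ne_zero hp)
  have hlog_deriv_bdd (x : ℝ) : ‖((Real.pi : ℂ) - β) - Real.pi *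
      (cosh ((Real.pi : ℂ) * (x + I / p)) / sinh ((Real.pi : ℂ) * (x + I / p)))‖ ≤
      ‖(Real.pi : ℂ) - β‖ + Real.pi * (Real.sin (Real.pi / p))⁻¹ := by
    refine (norm_sub_le _ _).trans ?_
    rw [norm_mul, norm_real, Real.norm_of_nonneg Real.pi_pos.le]
    gcongr
    exact norm_coth_pi_mul_add_I_div_le hp x
  refine ⟨boundedVariationOn_univ_of_hasDerivAt_of_integrable (hasDerivAt_rPB hp)
      (hr.mul_bdd (continuous_const.sub (continuous_const.mul hcoth)).aestronglyMeasurable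
        (ae_of_all _ hlog_deriv_bdd)),
    fun j => ⟨?_, hmoment j⟩, ⟨_, norm_coth_pi_mul_add_I_div_le hp⟩⟩
  obtain ⟨C, hC⟩ := exists_one_add_abs_pow_mul_moment_rPB_le hp hβ j 0
  exact ⟨C, by simpa using hC⟩
end
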